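/- Let $A' = \mathbb{C}(t)[x^2,x^3,x+ty] \subseteq B' = \mathbb{C}(t)[x,y]$. Then the ideal $x^2 B'$ is contained in $A'$, and the quotient $A'/x^2B'$ is isomorphic as a $\mathbb{C}(t)$-algebra to the polynomial ring $\mathbb{C}(t)[x + t y]$. -/
import Mathlib

set_option synthInstance.maxHeartbeats 1000000
set_option maxHeartbeats 1000000

open MvPolynomial

/-- The field `ℂ(t)` of rational functions. -/
noncomputable def Kt : Type := FractionRing (Polynomial ℂ)

noncomputable instance : Field Kt :=
  inferInstanceAs (Field (FractionRing (Polynomial ℂ)))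

noncomputable instance : Algebra (Polynomial ℂ) Kt :=
  inferInstanceAs (Algebra (Polynomial ℂ) (FractionRing (Polynomial ℂ)))

/-- The element `t ∈ ℂ(t)`. -/
noncomputable def tK : Kt := algebraMap (Polynomial ℂ) Kt Polynomial.X

/-- The ring `B' = ℂ(t)[x,y]`. -/
abbrev Bt : Type := MvPolynomial (Fin 2) Kt

lemma htK : tK ≠ 0 := by
  have h : Function.Injective (algebraMap (Polynomial ℂ) (FractionRing (Polynomial ℂ))) :=
    IsFractionRing.injective _ _
  intro hc
  exact Polynomial.X_ne_zero (h (by rw [map_zero]; exact hc))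

noncomputable def eAux : Bt →ₐ[Kt] Polynomial Kt :=
  aeval ![0, Polynomial.C tK⁻¹ * Polynomial.X]

lemma eAux_X0 : eAux (X 0) = 0 := by simp [eAux]

lemma eAux_s : eAux ((X 0 : Bt) + C tK * X 1) = Polynomial.X := by
  simp only [eAux, map_add, map_mul, aeval_X, aeval_C, Matrix.cons_val_zero,
    Matrix.cons_val_one, Matrix.head_cons]
  rw [Polynomial.algebraMap_eq, ← mul_assoc, ← Polynomial.C_mul, mul_inv_cancel₀ htK,
    Polynomial.C_1, one_mul, zero_add]


/-- In `A' = ℂ(t)[x², x³, x + t·y] ⊆ B' = ℂ(t)[x,y]`, the ideal `x²B'` of `B'` is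
contained in `A'`, and the quotient `A'/x²B'` is isomorphic as a `ℂ(t)`-algebra to the
polynomial ring `ℂ(t)[x + t·y]` in one variable. -/
theorem stmt_17 (A' : Subalgebra Kt Bt)
    (hA' : A' = Algebra.adjoin Kt {(X 0 : Bt) ^ 2, (X 0 : Bt) ^ 3, (X 0 : Bt) + C tK * X 1})
    (I : Ideal ↥A')
    (hI : I = Ideal.comap A'.val.toRingHom (Ideal.span {(X 0 : Bt) ^ 2})) :
    (∀ b : Bt, (X 0 : Bt) ^ 2 * b ∈ A') ∧
    Nonempty ((↥A' ⧸ I) ≃ₐ[Kt] Polynomial Kt) := by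
  set s : Bt := (X 0 : Bt) + C tK * X 1 with hsdef
  have hx2 : ((X 0 : Bt) ^ 2) ∈ A' := by
    rw [hA']; exact Algebra.subset_adjoin (by simp)
  have hx3 : ((X 0 : Bt) ^ 3) ∈ A' := by
    rw [hA']; exact Algebra.subset_adjoin (by simp)
  have hs : s ∈ A' := by
    rw [hA']; exact Algebra.subset_adjoin (by simp)
  have hC : ∀ r : Kt, (C r : Bt) ∈ A' := fun r => A'.algebraMap_mem r
  have hCinv : (C tK⁻¹ : Bt) * C tK = 1 := by
    rw [← C_mul, inv_mul_cancel₀ htK, C_1]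
  -- key membership lemma
  have key : ∀ b : Bt, (X 0 : Bt) ^ 2 * b ∈ A' ∧ (X 0 : Bt) ^ 3 * b ∈ A' := by
    intro b
    induction b using MvPolynomial.induction_on with
    | C a =>
      exact ⟨by rw [mul_comm]; exact A'.mul_mem (hC a) hx2,
             by rw [mul_comm]; exact A'.mul_mem (hC a) hx3⟩
    | add p q hp hq =>
      exact ⟨by rw [mul_add]; exact A'.add_mem hp.1 hq.1,
             by rw [mul_add]; exact A'.add_mem hp.2 hq.2⟩
    | mul_X p i hp =>
      fin_cases i
      · constructor
        · show (X 0 : Bt) ^ 2 * (p * X 0) ∈ A'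
          have : (X 0 : Bt) ^ 2 * (p * X 0) = (X 0) ^ 3 * p := by ring
          rw [this]; exact hp.2
        · show (X 0 : Bt) ^ 3 * (p * X 0) ∈ A'
          have : (X 0 : Bt) ^ 3 * (p * X 0) = (X 0) ^ 2 * ((X 0) ^ 2 * p) := by ring
          rw [this]; exact A'.mul_mem hx2 hp.1
      · constructor
        · show (X 0 : Bt) ^ 2 * (p * X 1) ∈ A'
          have hid : (X 0 : Bt) ^ 2 * (p * X 1) =
              C tK⁻¹ * ((X 0) ^ 2 * p * s - (X 0) ^ 3 * p) := by
            rw [hsdef]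
            calc (X 0 : Bt) ^ 2 * (p * X 1)
                = (C tK⁻¹ * C tK) * ((X 0) ^ 2 * (p * X 1)) := by rw [hCinv, one_mul]
              _ = C tK⁻¹ * ((X 0) ^ 2 * p * ((X 0) + C tK * X 1) - (X 0) ^ 3 * p) := by ring
          rw [hid]
          exact A'.mul_mem (hC _) (A'.sub_mem (A'.mul_mem hp.1 hs) hp.2)
        · show (X 0 : Bt) ^ 3 * (p * X 1) ∈ A'
          have hid : (X 0 : Bt) ^ 3 * (p * X 1) =
              C tK⁻¹ * ((X 0) ^ 3 * p * s - (X 0) ^ 2 * ((X 0) ^ 2 * p)) := by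
            rw [hsdef]
            calc (X 0 : Bt) ^ 3 * (p * X 1)
                = (C tK⁻¹ * C tK) * ((X 0) ^ 3 * (p * X 1)) := by rw [hCinv, one_mul]
              _ = C tK⁻¹ * ((X 0) ^ 3 * p * ((X 0) + C tK * X 1) - (X 0) ^ 2 * ((X 0) ^ 2 * p)) := by
                  ring
          rw [hid]
          exact A'.mul_mem (hC _) (A'.sub_mem (A'.mul_mem hp.2 hs) (A'.mul_mem hx2 hp.1))
  refine ⟨fun b => (key b).1, ?_⟩
  -- the algebra hom A' → Kt[X]
  set f : ↥A' →ₐ[Kt] Polynomial Kt := eAux.comp A'.val with hf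
  have hfs : f ⟨s, hs⟩ = Polynomial.X := eAux_s
  have hsurj : Function.Surjective f := by
    have : Polynomial.X ∈ f.range := ⟨⟨s, hs⟩, hfs⟩
    have htop : (⊤ : Subalgebra Kt (Polynomial Kt)) ≤ f.range := by
      rw [← Polynomial.adjoin_X]
      exact Algebra.adjoin_le (by simpa using this)
    intro p
    obtain ⟨a, ha⟩ := htop (Algebra.mem_top : p ∈ ⊤)
    exact ⟨a, ha⟩
  -- structure: every element of A' is aeval s p + x^2 * b
  have struct : ∀ a : Bt, a ∈ A' →
      ∃ p : Polynomial Kt, ∃ b : Bt, a = Polynomial.aeval s p + (X 0) ^ 2 * b := by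
    rw [hA']
    intro a ha
    induction ha using Algebra.adjoin_induction with
    | mem x hx =>
      simp only [Set.mem_insert_iff, Set.mem_singleton_iff] at hx
      rcases hx with h | h | h
      · exact ⟨0, 1, by simp [h]⟩
      · exact ⟨0, X 0, by simp [h]; ring⟩
      · exact ⟨Polynomial.X, 0, by simp [h]⟩
    | algebraMap r => exact ⟨Polynomial.C r, 0, by simp [algebraMap_eq]⟩
    | add x y hx hy hx' hy' =>
      obtain ⟨p, b, rfl⟩ := hx'
      obtain ⟨q, c, rfl⟩ := hy'
      exact ⟨p + q, b + c, by rw [map_add]; ring⟩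
    | mul x y hx hy hx' hy' =>
      obtain ⟨p, b, rfl⟩ := hx'
      obtain ⟨q, c, rfl⟩ := hy'
      refine ⟨p * q, b * (Polynomial.aeval s q) + (Polynomial.aeval s p) * c
        + (X 0) ^ 2 * (b * c), ?_⟩
      rw [map_mul]; ring
  -- kernel computation
  have hker : RingHom.ker f = I := by
    ext a
    rw [hI, Ideal.mem_comap, RingHom.mem_ker]
    constructor
    · intro h
      obtain ⟨p, b, hab⟩ := struct a.1 a.2
      have h2 : f a = p := by
        rw [hf]
        show eAux a.1 = p
        rw [hab, map_add, map_mul, map_pow, eAux_X0]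
        rw [← Polynomial.aeval_algHom_apply eAux s p, eAux_s, Polynomial.aeval_X_left_apply]
        ring
      have hp0 : p = 0 := by rw [← h2, h]
      have : (A'.val.toRingHom a : Bt) = (X 0) ^ 2 * b := by
        show a.1 = _
        rw [hab, hp0]; simp
      rw [this, Ideal.mem_span_singleton]
      exact Dvd.intro b rfl
    · intro h
      rw [Ideal.mem_span_singleton] at h
      obtain ⟨c, hc⟩ := h
      have : f a = eAux ((X 0) ^ 2 * c) := congrArg eAux hc
      rw [this, map_mul, map_pow, eAux_X0]
      ring
  rw [← hker]
  exact ⟨Ideal.quotientKerAlgEquivOfSurjective hsurj⟩
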